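/- (Pathwise censored key identity for post-exercise states, equations (4.8)/(4.10) for a single path.) For every t ≥ 0, every censoring time R > 0, and every j ∈ J₁: H(t) 1{Z(t) = j} 1{t < R} = − H(R) 1{Z(R) = j} 1{R ≤ t} + Σ_{k ∈ J₀} ∫_{(0, t ∧ R]} H(s) N_{kj}(ds) + Σ_{k ∈ J₁, k ≠ j} ( ∫_{(0, t ∧ R]} H(s) N_{kj}(ds) − ∫_{(0, t ∧ R]} H(s) N_{jk}(ds) ), where each integral is the finite sum of H(s) over the jump times s of the indicated type in (0, t ∧ R]. -/
import Mathlib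


open Set

/-- `∫_{(0,t]} h(s) N_{jk}(ds)`: the (finite) sum of `h(s)` over the jump times `s ∈ (0,t]`
of type `j → k` of the path `Z`, whose left-limit path is `Zm`. -/
noncomputable def jumpInt {J : Type*} (h : ℝ → ℝ) (Zm Z : ℝ → J) (j k : J) (t : ℝ) : ℝ :=
  ∑ᶠ s ∈ {s : ℝ | s ∈ Set.Ioc 0 t ∧ Zm s = j ∧ Z s = k}, h s

/-- The first hitting time `τ = inf{s > 0 : Z(s) ∈ J₁}` of `J₁ = J \ J₀`. -/
noncomputable def hitTime {J : Type*} [DecidableEq J] (J0 : Finset J) (Z : ℝ → J) : ℝ :=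
  sInf {s : ℝ | 0 < s ∧ Z s ∉ J0}

/-- The scaling factor `H(t) = ρ(τ, Z(τ−), Z(τ))^{1{τ ≤ t}}`; under the standing assumptions
(cadlag paths, `Z(0) = z₀ ∈ J₀`, `J₁` absorbing) one has `τ ≤ t` if and only if `Z(t) ∈ J₁`. -/
noncomputable def scaleH {J : Type*} [DecidableEq J] (J0 : Finset J) (ρ : ℝ → J → J → ℝ)
    (Zm Z : ℝ → J) (t : ℝ) : ℝ :=
  if Z t ∈ J0 then 1
  else ρ (hitTime J0 Z) (Zm (hitTime J0 Z)) (Z (hitTime J0 Z))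

lemma noJump_const {J : Type*} (Z Zm : ℝ → J)
    (hrc : ∀ s : ℝ, 0 ≤ s → ∃ ε > 0, ∀ u ∈ Set.Ico s (s + ε), Z u = Z s)
    (hll : ∀ s : ℝ, 0 < s → ∃ ε > 0, ∀ u ∈ Set.Ioo (s - ε) s, Z u = Zm s)
    {a b : ℝ} (ha : 0 ≤ a) (hab : a ≤ b)
    (h : ∀ s ∈ Set.Ioc a b, Zm s = Z s) : Z b = Z a := by
  set A : Set ℝ := {u | u ∈ Set.Icc a b ∧ ∀ v ∈ Set.Icc a u, Z v = Z a} with hA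
  have haA : a ∈ A := ⟨⟨le_refl a, hab⟩, fun v hv => by
    have : v = a := le_antisymm hv.2 hv.1
    rw [this]⟩
  have hbdd : BddAbove A := ⟨b, fun u hu => hu.1.2⟩
  set c := sSup A with hc
  have hac : a ≤ c := le_csSup hbdd haA
  have hcb : c ≤ b := csSup_le ⟨a, haA⟩ (fun u hu => hu.1.2)
  have hlt : ∀ v, a ≤ v → v < c → Z v = Z a := by
    intro v hav hvc
    obtain ⟨u, huA, hvu⟩ := exists_lt_of_lt_csSup ⟨a, haA⟩ hvc
    exact huA.2 v ⟨hav, le_of_lt hvu⟩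
  have hcZ : Z c = Z a := by
    rcases eq_or_lt_of_le hac with h' | h'
    · rw [← h']
    · have hc0 : 0 < c := lt_of_le_of_lt ha h'
      obtain ⟨ε, hε, hεp⟩ := hll c hc0
      have hZmc : Zm c = Z c := h c ⟨h', hcb⟩
      obtain ⟨v, hv1, hv2⟩ : ∃ v, max a (c - ε) < v ∧ v < c :=
        exists_between (max_lt h' (sub_lt_self c hε))
      have h1 : Z v = Zm c := hεp v ⟨lt_of_le_of_lt (le_max_right _ _) hv1, hv2⟩
      have h2 : Z v = Z a := hlt v (le_of_lt (lt_of_le_of_lt (le_max_left _ _) hv1)) hv2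
      rw [← hZmc, ← h1, h2]
  have hcA : c ∈ A := ⟨⟨hac, hcb⟩, fun v hv => by
    rcases lt_or_eq_of_le hv.2 with h' | h'
    · exact hlt v hv.1 h'
    · rw [h']; exact hcZ⟩
  have hcbeq : c = b := by
    by_contra hne
    have hclt : c < b := lt_of_le_of_ne hcb hne
    obtain ⟨ε, hε, hεp⟩ := hrc c (le_trans ha hac)
    set u := min b (c + ε / 2) with hu
    have hcu : c < u := lt_min hclt (by linarith)
    have huA : u ∈ A := by
      refine ⟨⟨le_trans hac (le_of_lt hcu), min_le_left _ _⟩, fun v hv => ?_⟩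
      rcases le_or_gt v c with h' | h'
      · exact hcA.2 v ⟨hv.1, h'⟩
      · have : Z v = Z c := hεp v ⟨le_of_lt h',
          lt_of_le_of_lt (le_trans hv.2 (min_le_right _ _)) (by linarith)⟩
        rw [this, hcZ]
    exact absurd (le_csSup hbdd huA) (not_le.mpr hcu)
  rw [← hcbeq, hcZ]

lemma telescope_aux {J : Type*} (Z Zm : ℝ → J)
    (hrc : ∀ s : ℝ, 0 ≤ s → ∃ ε > 0, ∀ u ∈ Set.Ico s (s + ε), Z u = Z s)
    (hll : ∀ s : ℝ, 0 < s → ∃ ε > 0, ∀ u ∈ Set.Ioo (s - ε) s, Z u = Zm s)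
    (hfin : ∀ t : ℝ, {s : ℝ | s ∈ Set.Ioc 0 t ∧ Zm s ≠ Z s}.Finite)
    (g : J → ℝ) :
    ∀ n : ℕ, ∀ T : ℝ, 0 ≤ T → (hfin T).toFinset.card ≤ n →
      g (Z T) - g (Z 0) = ∑ s ∈ (hfin T).toFinset, (g (Z s) - g (Zm s)) := by
  intro n
  induction n with
  | zero =>
    intro T hT hcard
    have hS : (hfin T).toFinset = ∅ := Finset.card_eq_zero.mp (Nat.le_zero.mp hcard)
    have hnj : ∀ s ∈ Set.Ioc 0 T, Zm s = Z s := by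
      intro s hs
      by_contra hne
      have : s ∈ (hfin T).toFinset := by
        simp only [Set.Finite.mem_toFinset, Set.mem_setOf_eq]; exact ⟨hs, hne⟩
      rw [hS] at this; exact absurd this (Finset.notMem_empty s)
    rw [hS, Finset.sum_empty, noJump_const Z Zm hrc hll le_rfl hT hnj, sub_self]
  | succ n ih =>
    intro T hT hcard
    rcases Finset.eq_empty_or_nonempty ((hfin T).toFinset) with hS | hne
    · have hnj : ∀ s ∈ Set.Ioc 0 T, Zm s = Z s := by
        intro s hs
        by_contra hne
        have : s ∈ (hfin T).toFinset := by
          simp only [Set.Finite.mem_toFinset, Set.mem_setOf_eq]; exact ⟨hs, hne⟩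
        rw [hS] at this; exact absurd this (Finset.notMem_empty s)
      rw [hS, Finset.sum_empty, noJump_const Z Zm hrc hll le_rfl hT hnj, sub_self]
    · set S := (hfin T).toFinset with hSdef
      set m := S.max' hne with hm
      have hmS : m ∈ S := S.max'_mem hne
      have hmprop : m ∈ Set.Ioc 0 T ∧ Zm m ≠ Z m := by
        simpa only [hSdef, Set.Finite.mem_toFinset, Set.mem_setOf_eq] using hmS
      have hm0 : 0 < m := hmprop.1.1
      have hmT : m ≤ T := hmprop.1.2
      obtain ⟨ε, hε, hεp⟩ := hll m hm0
      set ε₁ := min ε m with hε₁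
      have hε₁0 : 0 < ε₁ := lt_min hε hm0
      set T' := m - ε₁ / 2 with hT'
      have hT'0 : 0 < T' := by
        have : ε₁ ≤ m := min_le_right _ _
        simp only [hT']; linarith
      have hT'm : T' < m := by simp only [hT']; linarith
      have hT'ε : m - ε < T' := by
        have : ε₁ ≤ ε := min_le_left _ _
        simp only [hT']; linarith
      have hZT' : Z T' = Zm m := hεp T' ⟨hT'ε, hT'm⟩
      -- no jumps strictly between T' and m
      have hnojump_mid : ∀ s, T' < s → s < m → Zm s = Z s := by
        intro s hs1 hs2
        have hs0 : 0 < s := lt_trans hT'0 hs1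
        have hsε : m - ε < s := lt_trans hT'ε hs1
        have hZs : Z s = Zm m := hεp s ⟨hsε, hs2⟩
        obtain ⟨ε', hε', hεp'⟩ := hll s hs0
        obtain ⟨u, hu1, hu2⟩ : ∃ u, max (m - ε) (s - ε') < u ∧ u < s :=
          exists_between (max_lt hsε (sub_lt_self s hε'))
        have h1 : Z u = Zm s := hεp' u ⟨lt_of_le_of_lt (le_max_right _ _) hu1, hu2⟩
        have h2 : Z u = Zm m :=
          hεp u ⟨lt_of_le_of_lt (le_max_left _ _) hu1, lt_trans hu2 hs2⟩
        rw [← h1, h2, hZs]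
      -- jump set of T' is S.erase m
      have hSerase : (hfin T').toFinset = S.erase m := by
        ext s
        simp only [Set.Finite.mem_toFinset, Set.mem_setOf_eq, Finset.mem_erase, hSdef,
          Set.mem_Ioc]
        constructor
        · rintro ⟨⟨hs0, hsT'⟩, hne⟩
          exact ⟨ne_of_lt (lt_of_le_of_lt hsT' hT'm), ⟨⟨hs0, le_trans hsT' (le_trans
            (le_of_lt hT'm) hmT)⟩, hne⟩⟩
        · rintro ⟨hsm, ⟨⟨hs0, hsT⟩, hne⟩⟩
          refine ⟨⟨hs0, ?_⟩, hne⟩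
          have hsle : s ≤ m := S.le_max' s (by
            simp only [hSdef, Set.Finite.mem_toFinset, Set.mem_setOf_eq, Set.mem_Ioc]
            exact ⟨⟨hs0, hsT⟩, hne⟩)
          have hslt : s < m := lt_of_le_of_ne hsle hsm
          by_contra hgt
          push_neg at hgt
          exact hne (hnojump_mid s hgt hslt)
      have hcard' : (hfin T').toFinset.card ≤ n := by
        rw [hSerase]
        have := Finset.card_erase_of_mem hmS
        omega
      have hIH := ih T' (le_of_lt hT'0) hcard'
      -- Z T = Z m
      have hZT : Z T = Z m := by
        refine noJump_const Z Zm hrc hll (le_of_lt hm0) hmT (fun s hs => ?_)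
        by_contra hne'
        have hsS : s ∈ S := by
          simp only [hSdef, Set.Finite.mem_toFinset, Set.mem_setOf_eq, Set.mem_Ioc]
          exact ⟨⟨lt_trans hm0 hs.1, hs.2⟩, hne'⟩
        exact absurd (S.le_max' s hsS) (not_le.mpr hs.1)
      calc g (Z T) - g (Z 0) = (g (Z m) - g (Zm m)) + (g (Z T') - g (Z 0)) := by
            rw [hZT, hZT']; ring
        _ = (g (Z m) - g (Zm m)) + ∑ s ∈ S.erase m, (g (Z s) - g (Zm s)) := by
            rw [hIH, hSerase]
        _ = ∑ s ∈ S, (g (Z s) - g (Zm s)) := Finset.add_sum_erase S (fun s => g (Z s) - g (Zm s)) hmS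

/-- Pathwise censored key identity for post-exercise states: for `t ≥ 0`,
censoring time `R > 0` and `j ∈ J₁`,
`H(t) 1{Z(t) = j} 1{t < R} = − H(R) 1{Z(R) = j} 1{R ≤ t}
  + ∑_{k ∈ J₀} ∫_{(0, t∧R]} H(s) N_{kj}(ds)
  + ∑_{k ∈ J₁, k ≠ j} (∫_{(0, t∧R]} H(s) N_{kj}(ds) − ∫_{(0, t∧R]} H(s) N_{jk}(ds))`. -/
theorem censored_scaled_occupation_indicator_identity_post_exercise
    {J : Type*} [Fintype J] [DecidableEq J] (z0 : J) (J0 : Finset J) (Z Zm : ℝ → J)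
    (hz0 : z0 ∈ J0)
    (hZ0 : Z 0 = z0)
    (hrc : ∀ s : ℝ, 0 ≤ s → ∃ ε > 0, ∀ u ∈ Set.Ico s (s + ε), Z u = Z s)
    (hll : ∀ s : ℝ, 0 < s → ∃ ε > 0, ∀ u ∈ Set.Ioo (s - ε) s, Z u = Zm s)
    (hfin : ∀ t : ℝ, {s : ℝ | s ∈ Set.Ioc 0 t ∧ Zm s ≠ Z s}.Finite)
    (habs : ∀ s u : ℝ, 0 ≤ s → s ≤ u → Z s ∉ J0 → Z u ∉ J0)
    (ρ : ℝ → J → J → ℝ) (hρnn : ∀ t j k, 0 ≤ ρ t j k)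
    (R : ℝ) (hR : 0 < R)
    (t : ℝ) (ht : 0 ≤ t) (j : J) (hj : j ∉ J0) :
    scaleH J0 ρ Zm Z t * (if Z t = j then (1 : ℝ) else 0) * (if t < R then 1 else 0)
      = - scaleH J0 ρ Zm Z R * (if Z R = j then (1 : ℝ) else 0) * (if R ≤ t then 1 else 0)
        + ∑ k ∈ J0, jumpInt (scaleH J0 ρ Zm Z) Zm Z k j (min t R)
        + ∑ k ∈ J0ᶜ.erase j,
            (jumpInt (scaleH J0 ρ Zm Z) Zm Z k j (min t R)
              - jumpInt (scaleH J0 ρ Zm Z) Zm Z j k (min t R)) := by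
  set c := ρ (hitTime J0 Z) (Zm (hitTime J0 Z)) (Z (hitTime J0 Z)) with hcdef
  set H := scaleH J0 ρ Zm Z with hHdef
  have hHval : ∀ s, H s = if Z s ∈ J0 then 1 else c := fun s => rfl
  set T := min t R with hTdef
  have hT0 : 0 ≤ T := le_min ht (le_of_lt hR)
  set S := (hfin T).toFinset with hSdef
  have hmemS : ∀ s, s ∈ S ↔ (s ∈ Set.Ioc 0 T ∧ Zm s ≠ Z s) := by
    intro s
    simp only [hSdef, Set.Finite.mem_toFinset, Set.mem_setOf_eq]
  -- absorbing from the left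
  have habsL : ∀ s : ℝ, 0 < s → Zm s ∉ J0 → Z s ∉ J0 := by
    intro s hs hZm
    obtain ⟨ε, hε, hεp⟩ := hll s hs
    set u := max (s / 2) (s - ε / 2) with hu
    have hu1 : s - ε < u := lt_of_lt_of_le (by linarith) (le_max_right _ _)
    have hu2 : u < s := max_lt (by linarith) (by linarith)
    have hu0 : 0 < u := lt_of_lt_of_le (by linarith) (le_max_left _ _)
    have hZu : Z u = Zm s := hεp u ⟨hu1, hu2⟩
    exact habs u s (le_of_lt hu0) (le_of_lt hu2) (hZu ▸ hZm)
  -- jumpInt as a finset sum over S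
  have hjump : ∀ (k k' : J), k ≠ k' →
      jumpInt H Zm Z k k' T = ∑ s ∈ S.filter (fun s => Zm s = k ∧ Z s = k'), H s := by
    intro k k' hkk'
    have hset : {s : ℝ | s ∈ Set.Ioc 0 T ∧ Zm s = k ∧ Z s = k'}
        = ↑(S.filter (fun s => Zm s = k ∧ Z s = k')) := by
      ext s
      simp only [Finset.coe_filter, Set.mem_setOf_eq, hmemS]
      constructor
      · rintro ⟨hs, h1, h2⟩
        exact ⟨⟨hs, by rw [h1, h2]; exact hkk'⟩, h1, h2⟩
      · rintro ⟨⟨hs, _⟩, h⟩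
        exact ⟨hs, h⟩
    rw [jumpInt, hset, finsum_mem_coe_finset]
  -- convert each jumpInt-sum to a double sum and swap
  have hsumA : ∀ (F : Finset J) (hjF : j ∉ F),
      ∑ k ∈ F, jumpInt H Zm Z k j T
        = ∑ s ∈ S, ∑ k ∈ F, (if Zm s = k ∧ Z s = j then H s else 0) := by
    intro F hjF
    rw [Finset.sum_comm]
    refine Finset.sum_congr rfl (fun k hk => ?_)
    rw [hjump k j (fun h => hjF (h ▸ hk)), Finset.sum_filter]
  have hsumC :
      ∑ k ∈ J0ᶜ.erase j, jumpInt H Zm Z j k T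
        = ∑ s ∈ S, ∑ k ∈ J0ᶜ.erase j, (if Zm s = j ∧ Z s = k then H s else 0) := by
    rw [Finset.sum_comm]
    refine Finset.sum_congr rfl (fun k hk => ?_)
    rw [hjump j k (Finset.ne_of_mem_erase hk).symm, Finset.sum_filter]
  -- the pointwise identity for each jump s
  set g : J → ℝ := fun k => if k = j then c else 0 with hg
  have hpoint : ∀ s ∈ S,
      (∑ k ∈ J0, (if Zm s = k ∧ Z s = j then H s else 0))
        + ((∑ k ∈ J0ᶜ.erase j, (if Zm s = k ∧ Z s = j then H s else 0))
          - (∑ k ∈ J0ᶜ.erase j, (if Zm s = j ∧ Z s = k then H s else 0)))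
        = g (Z s) - g (Zm s) := by
    intro s hs
    obtain ⟨⟨hs0, hsT⟩, hsne⟩ := (hmemS s).mp hs
    by_cases hZj : Z s = j
    · have hZmj : Zm s ≠ j := fun h => hsne (h.trans hZj.symm)
      have hHc : H s = c := by rw [hHval, if_neg (hZj ▸ hj)]
      have key : ∀ F : Finset J,
          (∑ k ∈ F, if Zm s = k ∧ Z s = j then H s else 0)
            = if Zm s ∈ F then H s else 0 := by
        intro F
        simp only [hZj, and_true]
        exact Finset.sum_ite_eq F (Zm s) (fun _ => H s)
      have h3 : (∑ k ∈ J0ᶜ.erase j, if Zm s = j ∧ Z s = k then H s else 0) = 0 :=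
        Finset.sum_eq_zero (fun k _ => by rw [if_neg (fun h => hZmj h.1)])
      rw [key J0, key (J0ᶜ.erase j), h3, sub_zero]
      have hgZ : g (Z s) = c := by simp only [hg, hZj, if_pos rfl]
      have hgZm : g (Zm s) = 0 := by simp only [hg, if_neg hZmj]
      rw [hgZ, hgZm, sub_zero]
      by_cases hk : Zm s ∈ J0
      · rw [if_pos hk,
          if_neg (fun h => (Finset.mem_compl.mp (Finset.mem_of_mem_erase h)) hk),
          add_zero, hHc]
      · rw [if_neg hk, if_pos (Finset.mem_erase.mpr ⟨hZmj, Finset.mem_compl.mpr hk⟩),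
          zero_add, hHc]
    · have h1 : ∑ k ∈ J0, (if Zm s = k ∧ Z s = j then H s else 0) = 0 :=
        Finset.sum_eq_zero (fun k _ => by rw [if_neg (fun h => hZj h.2)])
      have h2 : ∑ k ∈ J0ᶜ.erase j, (if Zm s = k ∧ Z s = j then H s else 0) = 0 :=
        Finset.sum_eq_zero (fun k _ => by rw [if_neg (fun h => hZj h.2)])
      have hgZ : g (Z s) = 0 := by simp only [hg, if_neg hZj]
      by_cases hZmj : Zm s = j
      · have hZnJ0 : Z s ∉ J0 := habsL s hs0 (hZmj ▸ hj)
        have hHc : H s = c := by rw [hHval, if_neg hZnJ0]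
        have h3 : (∑ k ∈ J0ᶜ.erase j, if Zm s = j ∧ Z s = k then H s else 0) = H s := by
          have key : (∑ k ∈ J0ᶜ.erase j, if Zm s = j ∧ Z s = k then H s else 0)
              = if Z s ∈ J0ᶜ.erase j then H s else 0 := by
            simp only [hZmj, true_and]
            exact Finset.sum_ite_eq (J0ᶜ.erase j) (Z s) (fun _ => H s)
          rw [key, if_pos (Finset.mem_erase.mpr ⟨hZj, Finset.mem_compl.mpr hZnJ0⟩)]
        have hgZm : g (Zm s) = c := by simp only [hg, hZmj, if_pos rfl]
        rw [h1, h2, h3, hgZ, hgZm, hHc]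
        ring
      · have h3 : (∑ k ∈ J0ᶜ.erase j, if Zm s = j ∧ Z s = k then H s else 0) = 0 :=
          Finset.sum_eq_zero (fun k _ => by rw [if_neg (fun h => hZmj h.1)])
        have hgZm : g (Zm s) = 0 := by simp only [hg, if_neg hZmj]
        rw [h1, h2, h3, hgZ, hgZm]
        ring
  -- telescoping
  have htel : g (Z T) - g (Z 0) = ∑ s ∈ S, (g (Z s) - g (Zm s)) :=
    telescope_aux Z Zm hrc hll hfin g S.card T hT0 le_rfl
  have hg0 : g (Z 0) = 0 := by
    have h0 : Z 0 ≠ j := by rw [hZ0]; exact fun h => hj (h ▸ hz0)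
    simp only [hg, if_neg h0]
  -- combine the right-hand side
  have hRHS : ∑ k ∈ J0, jumpInt H Zm Z k j T
      + ∑ k ∈ J0ᶜ.erase j, (jumpInt H Zm Z k j T - jumpInt H Zm Z j k T)
      = g (Z T) := by
    rw [Finset.sum_sub_distrib, hsumA J0 hj,
      hsumA (J0ᶜ.erase j) (Finset.notMem_erase j _), hsumC,
      ← Finset.sum_sub_distrib, ← Finset.sum_add_distrib,
      Finset.sum_congr rfl hpoint, ← htel, hg0, sub_zero]
  -- the left-hand side
  have hHT : H T * (if Z T = j then (1 : ℝ) else 0) = g (Z T) := by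
    by_cases hZT : Z T = j
    · rw [if_pos hZT, mul_one]
      simp only [hg, if_pos hZT]
      rw [hHval, if_neg (hZT ▸ hj)]
    · rw [if_neg hZT, mul_zero]
      simp only [hg, if_neg hZT]
  rcases lt_or_ge t R with hlt | hge
  · have hTt : T = t := min_eq_left (le_of_lt hlt)
    rw [if_pos hlt, if_neg (not_le.mpr hlt), mul_one, mul_zero, zero_add]
    rw [hTt] at hRHS hHT ⊢
    rw [hHT] at *
    exact hRHS.symm
  · have hTt : T = R := min_eq_right hge
    rw [if_neg (not_lt.mpr hge), if_pos hge, mul_zero, mul_one, neg_mul]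
    rw [hTt] at hRHS hHT ⊢
    linarith [hHT, hRHS]
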